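/- arXiv:1612.02249 — 4 statements merged into one kernel-verified Lean document; each statement's English description precedes it below -/
import Mathlib

section
/- Let $f_1, \dots, f_k$ be polynomials in $R = F[z_1,\dots,z_n]$ such that the ideal they generate is the whole ring: $\langle f_1,\dots,f_k \rangle = \langle 1 \rangle$. Then the syzygy module $\mathrm{Syz}(f_1,\dots,f_k) = \{(a_1,\dots,a_k) \in R^k \mid \sum_i a_i f_i = 0\}$ is generated by the principal syzygies $P_{ij} = f_j e_i - f_i e_j$ for $1 \le i < j \le k$, where $e_i$ denotes the $i$-th standard basis element of $R^k$. -/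
theorem syz_aux {R : Type*} [CommRing R] {k : ℕ} (f : Fin k → R)
    (g : Fin k → R) (hg : ∑ i, g i * f i = 1) :
    {a : Fin k → R | ∑ i, a i * f i = 0} =
      (Submodule.span R
        {v : Fin k → R | ∃ i j : Fin k, i < j ∧
          v = f j • (Pi.single i 1 : Fin k → R)
              - f i • (Pi.single j 1 : Fin k → R)} : Set (Fin k → R)) := by
  classical
  apply Set.Subset.antisymm
  · intro a ha
    simp only [Set.mem_setOf_eq] at ha
    have key : a = ∑ i, ∑ j, (g j * a i) •
        (f j • (Pi.single i 1 : Fin k → R) - f i • (Pi.single j 1 : Fin k → R)) := by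
      funext m
      simp only [Finset.sum_apply, Pi.smul_apply, Pi.sub_apply, smul_eq_mul,
        Pi.single_apply, mul_sub, mul_ite, mul_one, mul_zero, Finset.sum_sub_distrib]
      have h1 : ∑ i : Fin k, ∑ j : Fin k,
          (if m = i then g j * a i * f j else 0) = a m := by
        rw [Finset.sum_comm]
        calc ∑ j : Fin k, ∑ i : Fin k, (if m = i then g j * a i * f j else 0)
            = ∑ j : Fin k, g j * a m * f j := by
              refine Finset.sum_congr rfl fun j _ => ?_
              simp [Finset.sum_ite_eq]
          _ = (∑ j : Fin k, g j * f j) * a m := by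
              rw [Finset.sum_mul]
              exact Finset.sum_congr rfl fun j _ => by ring
          _ = a m := by rw [hg, one_mul]
      have h2 : ∑ i : Fin k, ∑ j : Fin k,
          (if m = j then g j * a i * f i else 0) = 0 := by
        calc ∑ i : Fin k, ∑ j : Fin k, (if m = j then g j * a i * f i else 0)
            = ∑ i : Fin k, g m * a i * f i := by
              refine Finset.sum_congr rfl fun i _ => by simp [Finset.sum_ite_eq]
          _ = 0 := by
              simp only [mul_assoc, ← Finset.mul_sum, ha, mul_zero]
      rw [h1, h2]; ring
    rw [key]
    refine Submodule.sum_mem _ fun i _ => Submodule.sum_mem _ fun j _ => ?_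
    rcases lt_trichotomy i j with hij | rfl | hij
    · exact Submodule.smul_mem _ _ (Submodule.subset_span ⟨i, j, hij, rfl⟩)
    · simp
    · have e : f j • (Pi.single i 1 : Fin k → R) - f i • (Pi.single j 1 : Fin k → R) =
          -(f i • (Pi.single j 1 : Fin k → R) - f j • (Pi.single i 1 : Fin k → R)) := (neg_sub _ _).symm
      rw [e, smul_neg]
      exact Submodule.neg_mem _
        (Submodule.smul_mem _ _ (Submodule.subset_span ⟨j, i, hij, rfl⟩))
  · intro a ha
    let φ : (Fin k → R) →ₗ[R] R :=
      { toFun := fun a => ∑ i, a i * f i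
        map_add' := by intros; simp [add_mul, Finset.sum_add_distrib]
        map_smul' := by intros; simp [Finset.mul_sum, mul_assoc] }
    have hle : Submodule.span R {v : Fin k → R | ∃ i j : Fin k, i < j ∧
        v = f j • (Pi.single i 1 : Fin k → R) - f i • (Pi.single j 1 : Fin k → R)} ≤ LinearMap.ker φ := by
      rw [Submodule.span_le]
      rintro v ⟨i, j, hij, rfl⟩
      simp only [SetLike.mem_coe, LinearMap.mem_ker, LinearMap.coe_mk, AddHom.coe_mk, φ]
      simp only [Pi.sub_apply, Pi.smul_apply, Pi.single_apply, smul_eq_mul, sub_mul,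
        Finset.sum_sub_distrib, ite_mul, mul_ite, one_mul, zero_mul, mul_one, mul_zero,
        Finset.sum_ite_eq', Finset.mem_univ, if_true]
      ring
    exact hle ha

/-- If `⟨f₁,…,f_k⟩ = ⟨1⟩`, the syzygy module of `f₁,…,f_k` is generated by the
principal syzygies `P_{ij} = f_j e_i - f_i e_j`. -/
theorem stmt_4 {F : Type*} [Field F] {n k : ℕ}
    (f : Fin k → MvPolynomial (Fin n) F)
    (h : Ideal.span (Set.range f) = ⊤) :
    {a : Fin k → MvPolynomial (Fin n) F | ∑ i, a i * f i = 0} =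
      (Submodule.span (MvPolynomial (Fin n) F)
        {v : Fin k → MvPolynomial (Fin n) F | ∃ i j : Fin k, i < j ∧
          v = f j • (Pi.single i 1 : Fin k → MvPolynomial (Fin n) F)
              - f i • (Pi.single j 1 : Fin k → MvPolynomial (Fin n) F)} :
        Set (Fin k → MvPolynomial (Fin n) F)) := by
  obtain ⟨g, hg⟩ : ∃ g : Fin k → MvPolynomial (Fin n) F, ∑ i, g i * f i = 1 := by
    have h1 : (1 : MvPolynomial (Fin n) F) ∈ Ideal.span (Set.range f) := by
      rw [h]; exact Submodule.mem_top
    rw [Ideal.span, Submodule.mem_span_range_iff_exists_fun] at h1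
    simpa [smul_eq_mul] using h1
  exact syz_aux f g hg
end

section
/- Let $F = f_1^{s_1} \cdots f_k^{s_k}$ in $\mathbb{C}[z_1,\dots,z_n]$ where the $f_i$ are irreducible polynomials, pairwise non-associated ($f_i \nmid f_j$ for $i \neq j$), and $s_i \geq 1$. Then the module of polynomial tangent vector fields satisfies $T_F = T_{f_1} \cap \cdots \cap T_{f_k}$. -/
open MvPolynomial Finset
set_option maxHeartbeats 1000000

lemma pderiv_prod' {n k : ℕ} (i : Fin n) (t : Finset (Fin k))
    (g : Fin k → MvPolynomial (Fin n) ℂ) :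
    MvPolynomial.pderiv i (∏ j ∈ t, g j)
      = ∑ j ∈ t, (∏ l ∈ t.erase j, g l) * MvPolynomial.pderiv i (g j) := by
  induction t using Finset.induction_on with
  | empty => simp
  | insert _ _ ha ih =>
    rename_i a t
    rw [Finset.prod_insert ha, Derivation.leibniz, smul_eq_mul, smul_eq_mul,
      Finset.sum_insert ha, Finset.erase_insert ha, ih, Finset.mul_sum]
    rw [add_comm]
    congr 1
    apply Finset.sum_congr rfl
    intro j hj
    rw [Finset.erase_insert_of_ne (by rintro rfl; exact ha hj),
      Finset.prod_insert (fun h => ha (Finset.mem_of_mem_erase h))]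
    ring

/-- If `F = f₁^{s₁} ⋯ f_k^{s_k}` with the `f_i` irreducible and pairwise non-associated,
then the module of polynomial tangent vector fields satisfies `T_F = ⋂ T_{f_i}`. -/
theorem stmt_6 {n k : ℕ} (f : Fin k → MvPolynomial (Fin n) ℂ) (s : Fin k → ℕ)
    (hirr : ∀ i, Irreducible (f i))
    (hnd : ∀ i j, i ≠ j → ¬ f i ∣ f j)
    (hs : ∀ i, 1 ≤ s i)
    (F : MvPolynomial (Fin n) ℂ) (hF : F = ∏ i, f i ^ s i) :
    {a : Fin n → MvPolynomial (Fin n) ℂ |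
        ∃ b : MvPolynomial (Fin n) ℂ, ∑ i, a i * MvPolynomial.pderiv i F = b * F} =
      ⋂ j : Fin k, {a : Fin n → MvPolynomial (Fin n) ℂ |
        ∃ b : MvPolynomial (Fin n) ℂ, ∑ i, a i * MvPolynomial.pderiv i (f j) = b * f j} := by
  classical
  set G : Fin k → MvPolynomial (Fin n) ℂ :=
    fun j => f j ^ (s j - 1) * ∏ l ∈ Finset.univ.erase j, f l ^ s l with hG
  have hGf : ∀ j, G j * f j = F := by
    intro j
    have h1 : f j ^ (s j - 1) * f j = f j ^ s j := by
      rw [← pow_succ, Nat.sub_add_cancel (hs j)]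
    calc G j * f j = (f j ^ (s j - 1) * f j) * ∏ l ∈ Finset.univ.erase j, f l ^ s l := by ring
      _ = f j ^ s j * ∏ l ∈ Finset.univ.erase j, f l ^ s l := by rw [h1]
      _ = F := by
          rw [hF]
          exact Finset.mul_prod_erase Finset.univ (fun l => f l ^ s l) (Finset.mem_univ j)
  have hpd : ∀ i : Fin n, MvPolynomial.pderiv i F
      = ∑ j, (s j : MvPolynomial (Fin n) ℂ) * G j * MvPolynomial.pderiv i (f j) := by
    intro i
    rw [hF, pderiv_prod']
    apply Finset.sum_congr rfl
    intro j _
    rw [MvPolynomial.pderiv_pow, hG]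
    ring
  have hsum : ∀ a : Fin n → MvPolynomial (Fin n) ℂ,
      ∑ i, a i * MvPolynomial.pderiv i F
        = ∑ j, (s j : MvPolynomial (Fin n) ℂ) * G j * (∑ i, a i * MvPolynomial.pderiv i (f j)) := by
    intro a
    rw [show (∑ i, a i * MvPolynomial.pderiv i F)
        = ∑ i, ∑ j, a i * ((s j : MvPolynomial (Fin n) ℂ) * G j * MvPolynomial.pderiv i (f j))
      from Finset.sum_congr rfl (fun i _ => by rw [hpd i, Finset.mul_sum]),
      Finset.sum_comm]
    apply Finset.sum_congr rfl
    intro j _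
    rw [Finset.mul_sum]
    exact Finset.sum_congr rfl fun i _ => by ring
  ext a
  simp only [Set.mem_setOf_eq, Set.mem_iInter]
  constructor
  · rintro ⟨b, hb⟩ j
    have hprime : Prime (f j) := (hirr j).prime
    have key : f j ^ s j ∣ (s j : MvPolynomial (Fin n) ℂ) * G j
        * (∑ i, a i * MvPolynomial.pderiv i (f j)) := by
      have hsplit : (s j : MvPolynomial (Fin n) ℂ) * G j
            * (∑ i, a i * MvPolynomial.pderiv i (f j))
          = b * F - ∑ l ∈ Finset.univ.erase j,
              (s l : MvPolynomial (Fin n) ℂ) * G l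
                * (∑ i, a i * MvPolynomial.pderiv i (f l)) := by
        rw [← hb, hsum a, eq_sub_iff_add_eq]
        exact Finset.add_sum_erase Finset.univ _ (Finset.mem_univ j)
      rw [hsplit]
      have hFd : f j ^ s j ∣ F := by
        rw [hF]; exact Finset.dvd_prod_of_mem _ (Finset.mem_univ j)
      refine dvd_sub (hFd.mul_left b) (Finset.dvd_sum ?_)
      intro l hl
      have hjl : j ≠ l := fun h => (Finset.mem_erase.1 hl).1 h.symm
      have hdG : f j ^ s j ∣ G l := by
        rw [hG]
        exact ((Finset.dvd_prod_of_mem (fun m => f m ^ s m)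
          (Finset.mem_erase.2 ⟨hjl, Finset.mem_univ j⟩))).mul_left _
      exact (hdG.mul_left _).mul_right _
    have key2 : f j ∣ (s j : MvPolynomial (Fin n) ℂ)
        * (∏ l ∈ Finset.univ.erase j, f l ^ s l)
        * (∑ i, a i * MvPolynomial.pderiv i (f j)) := by
      have hne : f j ^ (s j - 1) ≠ 0 := pow_ne_zero _ (hirr j).ne_zero
      have heq : (s j : MvPolynomial (Fin n) ℂ) * G j
            * (∑ i, a i * MvPolynomial.pderiv i (f j))
          = f j ^ (s j - 1) * ((s j : MvPolynomial (Fin n) ℂ)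
            * (∏ l ∈ Finset.univ.erase j, f l ^ s l)
            * (∑ i, a i * MvPolynomial.pderiv i (f j))) := by
        rw [hG]; ring
      have hpow : f j ^ s j = f j ^ (s j - 1) * f j := by
        rw [← pow_succ, Nat.sub_add_cancel (hs j)]
      rw [heq, hpow] at key
      exact (mul_dvd_mul_iff_left hne).1 key
    have hDdvd : f j ∣ ∑ i, a i * MvPolynomial.pderiv i (f j) := by
      rcases hprime.dvd_or_dvd key2 with h | h
      · exfalso
        rcases hprime.dvd_or_dvd h with h | h
        · have hc : ((s j : ℂ)) ≠ 0 :=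
            Nat.cast_ne_zero.2 (Nat.one_le_iff_ne_zero.1 (hs j))
          have hu : IsUnit ((s j : MvPolynomial (Fin n) ℂ)) := by
            rw [show ((s j : MvPolynomial (Fin n) ℂ))
              = MvPolynomial.C ((s j : ℂ)) from (map_natCast MvPolynomial.C (s j)).symm]
            exact (Ne.isUnit hc).map (MvPolynomial.C : ℂ →+* MvPolynomial (Fin n) ℂ)
          exact (hirr j).not_isUnit (isUnit_of_dvd_unit h hu)
        · rcases (hprime.dvd_finset_prod_iff _).1 h with ⟨l, hl, hdl⟩
          have hjl : j ≠ l := fun hh => (Finset.mem_erase.1 hl).1 hh.symm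
          exact hnd j l hjl (hprime.dvd_of_dvd_pow hdl)
      · exact h
    rcases hDdvd with ⟨c, hc⟩
    exact ⟨c, by rw [hc, mul_comm]⟩
  · intro h
    choose b hb using h
    refine ⟨∑ j, (s j : MvPolynomial (Fin n) ℂ) * b j, ?_⟩
    rw [hsum, Finset.sum_mul]
    apply Finset.sum_congr rfl
    intro j _
    rw [hb j, ← hGf j]
    ring
end

section
/- Let $a, b$ be real numbers and suppose real numbers $x, y, z$ satisfy $x + y + z = a$, $x^2 + y^2 + z^2 = b^2$, and $xy = z^2$. Then $z = (a^2 - b^2)/(2a)$ provided $a \neq 0$, and $x, y$ are the two roots of $4a^2 w^2 - 2a(a^2+b^2) w + (a^4 - 2a^2 b^2 + b^4) = 0$. Moreover, there exists a solution with $x, y, z$ positive and pairwise distinct if and only if $a > 0$ and $b^2 < a^2 < 3b^2$. -/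
/-- IMO 1961/1: for the system `x+y+z = a`, `x²+y²+z² = b²`, `xy = z²` over ℝ,
any solution has `z = (a²-b²)/(2a)` (if `a ≠ 0`) and `x`, `y` are roots of
`4a²w² - 2a(a²+b²)w + (a⁴ - 2a²b² + b⁴) = 0`; and a solution with `x, y, z` positive and
pairwise distinct exists iff `a > 0` and `b² < a² < 3b²`. -/
theorem stmt_13 (a b : ℝ) :
    (∀ x y z : ℝ, x + y + z = a → x ^ 2 + y ^ 2 + z ^ 2 = b ^ 2 → x * y = z ^ 2 →
      (a ≠ 0 → z = (a ^ 2 - b ^ 2) / (2 * a)) ∧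
      4 * a ^ 2 * x ^ 2 - 2 * a * (a ^ 2 + b ^ 2) * x
        + (a ^ 4 - 2 * a ^ 2 * b ^ 2 + b ^ 4) = 0 ∧
      4 * a ^ 2 * y ^ 2 - 2 * a * (a ^ 2 + b ^ 2) * y
        + (a ^ 4 - 2 * a ^ 2 * b ^ 2 + b ^ 4) = 0) ∧
    ((∃ x y z : ℝ, x + y + z = a ∧ x ^ 2 + y ^ 2 + z ^ 2 = b ^ 2 ∧ x * y = z ^ 2 ∧
        0 < x ∧ 0 < y ∧ 0 < z ∧ x ≠ y ∧ y ≠ z ∧ x ≠ z) ↔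
      (0 < a ∧ b ^ 2 < a ^ 2 ∧ a ^ 2 < 3 * b ^ 2)) := by
  constructor
  · intro x y z h1 h2 h3
    have e1 : 2 * a * z = a ^ 2 - b ^ 2 := by
      linear_combination (x + y + a - z) * h1 - h2 - 2 * h3
    refine ⟨?_, ?_, ?_⟩
    · intro ha
      field_simp
      linarith [e1]
    · linear_combination (4 * a ^ 2 * x) * h1 - 4 * a ^ 2 * h3
        - (2 * a * x + a ^ 2 - b ^ 2 + 2 * a * z) * e1
    · linear_combination (4 * a ^ 2 * y) * h1 - 4 * a ^ 2 * h3
        - (2 * a * y + a ^ 2 - b ^ 2 + 2 * a * z) * e1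
  · constructor
    · rintro ⟨x, y, z, h1, h2, h3, hx, hy, hz, hxy, hyz, hxz⟩
      have e1 : 2 * a * z = a ^ 2 - b ^ 2 := by
        linear_combination (x + y + a - z) * h1 - h2 - 2 * h3
      have ha : 0 < a := by linarith
      have hba : b ^ 2 < a ^ 2 := by nlinarith [mul_pos ha hz]
      refine ⟨ha, hba, ?_⟩
      have hd : (x - y) ^ 2 > 0 := by
        have := sub_ne_zero.mpr hxy
        positivity
      nlinarith [sq_nonneg a, mul_pos ha ha, mul_pos (mul_pos ha ha) hd,
        sq_nonneg (x - y), sq_nonneg (x + y)]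
    · rintro ⟨ha, hba, hab⟩
      have h3a : 0 < 3 * a ^ 2 - b ^ 2 := by nlinarith
      have h3b : 0 < 3 * b ^ 2 - a ^ 2 := by nlinarith
      set D : ℝ := (3 * b ^ 2 - a ^ 2) * (3 * a ^ 2 - b ^ 2) with hD
      have hDpos : 0 < D := mul_pos h3b h3a
      set s : ℝ := Real.sqrt D with hs
      have hs2 : s ^ 2 = D := Real.sq_sqrt hDpos.le
      have hspos : 0 < s := Real.sqrt_pos.mpr hDpos
      have hkey : s ^ 2 < (a ^ 2 + b ^ 2) ^ 2 := by
        rw [hs2]; nlinarith [sq_nonneg (a ^ 2 - b ^ 2)]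
      have hslt : s < a ^ 2 + b ^ 2 := by
        nlinarith [hspos, sq_nonneg (s - (a ^ 2 + b ^ 2))]
      refine ⟨(a ^ 2 + b ^ 2 - s) / (4 * a), (a ^ 2 + b ^ 2 + s) / (4 * a),
        (a ^ 2 - b ^ 2) / (2 * a), ?_, ?_, ?_, ?_, ?_, ?_, ?_, ?_, ?_⟩
      · field_simp; ring
      · field_simp
        nlinarith [hs2]
      · field_simp
        nlinarith [hs2]
      · apply div_pos (by linarith) (by linarith)
      · apply div_pos (by linarith) (by linarith)
      · apply div_pos (by linarith) (by linarith)
      · intro h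
        have : (a ^ 2 + b ^ 2 - s) = (a ^ 2 + b ^ 2 + s) := by
          have h4 : (4 : ℝ) * a ≠ 0 := by positivity
          field_simp at h
          linarith [h]
        linarith
      · intro h
        have h4 : (4 : ℝ) * a ≠ 0 := by positivity
        have h2 : (2 : ℝ) * a ≠ 0 := by positivity
        rw [div_eq_div_iff h4 h2] at h
        nlinarith [hspos, mul_pos ha hspos]
      · intro h
        have h4 : (4 : ℝ) * a ≠ 0 := by positivity
        have h2 : (2 : ℝ) * a ≠ 0 := by positivity
        rw [div_eq_div_iff h4 h2] at h
        nlinarith [hspos, mul_pos ha hspos]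
end

section
/- Let $U$ be an open polydisc $\Delta(0,r) \subseteq \mathbb{C}^2$ and let $f$ be holomorphic on $U \setminus \{(0,0)\}$. Then $f$ extends to a holomorphic function on all of $U$ (Hartogs' extension for an isolated point in two variables). -/
open Complex Metric Set MeasureTheory Filter
open scoped Real Topology Interval

namespace H18


def S (r : ℝ) : Set (ℂ × ℂ) :=
  {p : ℂ × ℂ | ‖p.1‖ < r ∧ ‖p.2‖ < r} \ {(0, 0)}

lemma isOpen_S {r : ℝ} : IsOpen (S r) := by
  apply IsOpen.sdiff _ isClosed_singleton
  exact (isOpen_lt (continuous_norm.comp continuous_fst) continuous_const).inter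
    (isOpen_lt (continuous_norm.comp continuous_snd) continuous_const)

lemma mem_S {r : ℝ} {a b : ℂ} (ha : ‖a‖ < r) (hb : ‖b‖ < r)
    (h : ¬(a = 0 ∧ b = 0)) : (a, b) ∈ S r := by
  refine ⟨⟨ha, hb⟩, ?_⟩
  simp only [mem_singleton_iff, Prod.mk.injEq]
  exact h

lemma diffAt {r : ℝ} {f : ℂ × ℂ → ℂ} (hf : DifferentiableOn ℂ f (S r)) {a b : ℂ}
    (ha : ‖a‖ < r) (hb : ‖b‖ < r) (h : ¬(a = 0 ∧ b = 0)) :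
    DifferentiableAt ℂ f (a, b) :=
  hf.differentiableAt (isOpen_S.mem_nhds (mem_S ha hb h))

lemma sliceDiffAt₁ {r : ℝ} {f : ℂ × ℂ → ℂ} (hf : DifferentiableOn ℂ f (S r)) {a b : ℂ}
    (ha : ‖a‖ < r) (hb : ‖b‖ < r) (h : ¬(a = 0 ∧ b = 0)) :
    DifferentiableAt ℂ (fun ζ => f (ζ, b)) a :=
  (diffAt hf ha hb h).comp a ((differentiableAt_id).prodMk (differentiableAt_const _))

/-- Lipschitz estimate in the first variable, via the Schwarz/dslope bound. -/
lemma sliceLip {r : ℝ} (hr : 0 < r) {f : ℂ × ℂ → ℂ} (hf : DifferentiableOn ℂ f (S r))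
    {M₁ : ℝ} (hM₁0 : 0 ≤ M₁) (hM₁ : ∀ a w : ℂ, ‖a‖ ≤ r/2 → ‖w‖ = 3*r/4 → ‖f (a, w)‖ ≤ M₁)
    {w x y : ℂ} (hw : ‖w‖ = 3*r/4)
    (hx : ‖x‖ < r/8) (hy : ‖y‖ < r/8) :
    ‖f (x, w) - f (y, w)‖ ≤ (2*M₁+1)/(r/4) * ‖x - y‖ := by
  have hw0 : w ≠ 0 := by
    intro hq; rw [hq] at hw; simp at hw; linarith
  set g : ℂ → ℂ := fun ζ => f (ζ, w) with hg
  rcases eq_or_ne x y with h | h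
  · simp only [h, sub_self, norm_zero]
    positivity
  · have hball : ball y (r/4) ⊆ ball (0:ℂ) (r/2) := by
      intro ζ hζ
      rw [mem_ball, dist_eq_norm] at hζ
      rw [mem_ball_zero_iff]
      calc ‖ζ‖ = ‖(ζ - y) + y‖ := by ring_nf
      _ ≤ ‖ζ - y‖ + ‖y‖ := norm_add_le _ _
      _ < r/4 + r/8 := by
          refine add_lt_add hζ ?_
          exact hy
      _ ≤ r/2 := by linarith
    have hd : DifferentiableOn ℂ g (ball y (r/4)) := by
      intro ζ hζ
      have := hball hζ
      rw [mem_ball_zero_iff] at this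
      exact (sliceDiffAt₁ hf (by linarith) (by linarith)
        (fun hq => hw0 hq.2)).differentiableWithinAt
    have hmaps : MapsTo g (ball y (r/4)) (ball (g y) (2*M₁+1)) := by
      intro ζ hζ
      have hζ' := hball hζ
      rw [mem_ball_zero_iff] at hζ'
      rw [mem_ball, dist_eq_norm]
      have b1 : ‖g ζ‖ ≤ M₁ := hM₁ ζ w (by linarith) hw
      have b2 : ‖g y‖ ≤ M₁ := hM₁ y w (by linarith) hw
      calc ‖g ζ - g y‖ ≤ ‖g ζ‖ + ‖g y‖ := norm_sub_le _ _
      _ ≤ M₁ + M₁ := add_le_add b1 b2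
      _ < 2*M₁+1 := by linarith
    have hxmem : x ∈ ball y (r/4) := by
      rw [mem_ball, dist_eq_norm]
      calc ‖x - y‖ ≤ ‖x‖ + ‖y‖ := norm_sub_le _ _
      _ < r/8 + r/8 := add_lt_add hx hy
      _ = r/4 := by ring
    have hds := Complex.norm_dslope_le_div_of_mapsTo_ball hd (hmaps.mono_right ball_subset_closedBall) hxmem
    rw [dslope_of_ne _ h, slope_def_module, norm_smul, norm_inv] at hds
    -- hds : ‖x - y‖⁻¹ * ‖g x - g y‖ ≤ (2*M₁+1)/(r/4)
    have hxy : (0:ℝ) < ‖x - y‖ := by simpa [sub_eq_zero] using h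
    calc ‖g x - g y‖ = (‖x - y‖⁻¹ * ‖g x - g y‖) * ‖x - y‖ := by
          rw [mul_comm (‖x - y‖⁻¹), mul_assoc, inv_mul_cancel₀ hxy.ne', mul_one]
    _ ≤ (2*M₁+1)/(r/4) * ‖x - y‖ := by gcongr

set_option maxHeartbeats 1000000 in
lemma diffAt_G {r : ℝ} (hr : 0 < r) {f : ℂ × ℂ → ℂ} (hf : DifferentiableOn ℂ f (S r)) :
    DifferentiableAt ℂ
      (fun z : ℂ × ℂ => ∮ w in C(0, 3*r/4), (w - z.2)⁻¹ • f (z.1, w)) 0 := by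
  set R : ℝ := 3*r/4 with hR
  have hRpos : 0 < R := by rw [hR]; positivity
  have hRr : R < r := by rw [hR]; linarith
  set c : ℝ → ℂ := circleMap 0 R with hc
  have hcabs : ∀ θ, ‖c θ‖ = R := fun θ => by
    simp [hc, norm_circleMap_zero, abs_of_pos hRpos]
  have hcnorm : ∀ θ, ‖c θ‖ = R := fun θ => by
    exact hcabs θ
  have hc0 : ∀ θ, c θ ≠ 0 := fun θ => circleMap_ne_center hRpos.ne'
  have habs0r : ‖(0:ℂ)‖ < r := by simpa using hr
  -- continuity of slices along the circle
  have hcontf : ∀ a : ℂ, ‖a‖ < r → Continuous (fun θ => f (a, c θ)) := by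
    intro a ha
    exact hf.continuousOn.comp_continuous
      (continuous_const.prodMk (continuous_circleMap 0 R))
      (fun θ => mem_S ha (by rw [hcabs]; exact hRr) (fun hq => hc0 θ hq.2))
  -- bound M₁ for |f| on (closedBall (r/2)) × (sphere R)
  obtain ⟨M, hM⟩ := (((isCompact_closedBall (0:ℂ) (r/2)).prod
      (isCompact_sphere (0:ℂ) R))).exists_bound_of_continuousOn
      (hf.continuousOn.mono (by
        rintro ⟨a, b⟩ ⟨ha, hb⟩
        rw [mem_closedBall_zero_iff] at ha
        rw [mem_sphere_zero_iff_norm] at hb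
        refine mem_S (by linarith) (by rw [hb]; exact hRr) ?_
        rintro ⟨-, h0⟩
        rw [h0] at hb; simp at hb; rw [hR] at hb; linarith))
  set M₁ : ℝ := max M 0 with hM₁def
  have hM₁0 : 0 ≤ M₁ := le_max_right _ _
  have hM₁ : ∀ a w : ℂ, ‖a‖ ≤ r/2 → ‖w‖ = R → ‖f (a, w)‖ ≤ M₁ := by
    intro a w ha hw
    refine le_trans (hM (a, w) ⟨?_, ?_⟩) (le_max_left _ _)
    · rwa [mem_closedBall_zero_iff]
    · rwa [mem_sphere_zero_iff_norm]
  set K : ℂ × ℂ → ℝ → ℂ := fun z θ =>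
    deriv (circleMap 0 R) θ * ((c θ - z.2)⁻¹ * f (z.1, c θ)) with hK
  set d : ℝ → ℂ := fun θ => deriv (fun ζ => f (ζ, c θ)) 0 with hd
  set fstL : (ℂ × ℂ) →L[ℂ] ℂ := ContinuousLinearMap.fst ℂ ℂ ℂ with hfstL
  set sndL : (ℂ × ℂ) →L[ℂ] ℂ := ContinuousLinearMap.snd ℂ ℂ ℂ with hsndL
  set F' : ℝ → (ℂ × ℂ) →L[ℂ] ℂ := fun θ =>
    deriv (circleMap 0 R) θ • ((c θ - (0:ℂ))⁻¹ • (d θ • fstL)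
      + f (0, c θ) • ((-(-1:ℂ)/(c θ - 0)^2) • sndL)) with hF'
  have hcr : ∀ θ, ‖c θ‖ < r := fun θ => by rw [hcabs]; exact hRr
  have hB1 : ∀ θ, HasDerivAt (fun ζ => f (ζ, c θ)) (d θ) 0 := fun θ =>
    (sliceDiffAt₁ hf habs0r (hcr θ) (fun hq => hc0 θ hq.2)).hasDerivAt
  -- pointwise joint derivative of the integrand
  have h_diff : ∀ θ : ℝ, HasFDerivAt (fun z : ℂ × ℂ => K z θ) (F' θ) 0 := by
    intro θ
    have hfst : HasFDerivAt (Prod.fst : ℂ × ℂ → ℂ) fstL (0:ℂ × ℂ) := hasFDerivAt_fst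
    have hsnd : HasFDerivAt (Prod.snd : ℂ × ℂ → ℂ) sndL (0:ℂ × ℂ) := hasFDerivAt_snd
    have hB : HasFDerivAt (fun z : ℂ × ℂ => f (z.1, c θ)) (d θ • fstL) 0 := by
      have hEq : (ContinuousLinearMap.toSpanSingleton ℂ (d θ)).comp fstL
          = d θ • fstL := by
        refine ContinuousLinearMap.ext fun v => ?_
        simp [hfstL, mul_comm]
      have h0 := ((hB1 θ).hasFDerivAt).comp (0:ℂ × ℂ) hfst
      rw [hEq] at h0
      exact h0
    have hA1 : HasDerivAt (fun t : ℂ => (c θ - t)⁻¹) (-(-1:ℂ)/(c θ - 0)^2) 0 := by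
      have h1 : HasDerivAt (fun t : ℂ => c θ - t) (-1) (0:ℂ) :=
        (hasDerivAt_id (0:ℂ)).const_sub (c θ)
      exact h1.inv (by rw [sub_zero]; exact hc0 θ)
    have hA : HasFDerivAt (fun z : ℂ × ℂ => (c θ - z.2)⁻¹)
        ((-(-1:ℂ)/(c θ - 0)^2) • sndL) 0 := by
      have hEq : (ContinuousLinearMap.toSpanSingleton ℂ (-(-1:ℂ)/(c θ - 0)^2)).comp sndL
          = (-(-1:ℂ)/(c θ - 0)^2) • sndL := by
        refine ContinuousLinearMap.ext fun v => ?_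
        simp [hsndL, mul_comm]
      have h0 := (hA1.hasFDerivAt).comp (0:ℂ × ℂ) hsnd
      rw [hEq] at h0
      exact h0
    exact (hA.mul hB).const_mul (deriv (circleMap 0 R) θ)
  -- continuity in θ
  have hderivc : Continuous (deriv (circleMap 0 R)) := by
    have : deriv (circleMap 0 R) = fun θ => circleMap 0 R θ * I := by
      funext θ; exact deriv_circleMap _ _ _
    rw [this]; exact (continuous_circleMap 0 R).mul continuous_const
  have hKcont : ∀ x : ℂ × ℂ, ‖x.1‖ < r/8 → ‖x.2‖ < r/8 →
      Continuous (fun θ => K x θ) := by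
    intro x hx1 hx2
    apply hderivc.mul
    apply Continuous.mul
    · apply Continuous.inv₀
      · exact (continuous_circleMap 0 R).sub continuous_const
      · intro θ
        refine sub_ne_zero.2 (fun hq => ?_)
        have := hcabs θ
        rw [hq] at this
        rw [hR] at this
        linarith
    · exact hcontf x.1 (by linarith)
  have hF_meas : ∀ᶠ x in 𝓝 (0:ℂ × ℂ), AEStronglyMeasurable (fun θ => K x θ)
      (volume.restrict (Ι (0:ℝ) (2*π))) := by
    filter_upwards [ball_mem_nhds (0:ℂ × ℂ) (by positivity : (0:ℝ) < r/8)] with x hx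
    rw [mem_ball_zero_iff, Prod.norm_def, max_lt_iff] at hx
    exact (hKcont x hx.1 hx.2).aestronglyMeasurable
  have hF_int : IntervalIntegrable (fun θ => K 0 θ) volume 0 (2*π) :=
    (hKcont 0 (by simpa using (by positivity : (0:ℝ) < r/8))
      (by simpa using (by positivity : (0:ℝ) < r/8))).intervalIntegrable 0 (2*π)
  -- measurability of F'
  have hdcont0 : Continuous (fun θ => f (0, c θ)) := hcontf 0 habs0r
  have haestrong_d : AEStronglyMeasurable d (volume.restrict (Ι (0:ℝ) (2*π))) := by
    set a : ℕ → ℂ := fun n => ((r/8 / (n+1) : ℝ) : ℂ) with ha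
    have hapos : ∀ n : ℕ, (0:ℝ) < r/8 / (n+1) := by
      intro n; positivity
    have ha0 : ∀ n, a n ≠ 0 := by
      intro n
      simp only [ha, ne_eq, Complex.ofReal_eq_zero]
      exact (hapos n).ne'
    have haabs : ∀ n, ‖a n‖ < r := by
      intro n
      simp only [ha, Complex.norm_real, Real.norm_eq_abs]
      rw [abs_of_pos (hapos n)]
      have h1 : r/8 / ((n:ℝ)+1) ≤ r/8 := by
        rw [div_le_iff₀ (by positivity)]
        nlinarith [Nat.cast_nonneg (α := ℝ) n]
      linarith
    have hatend : Tendsto a atTop (𝓝[≠] (0:ℂ)) := by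
      rw [tendsto_nhdsWithin_iff]
      constructor
      · have h1 : Tendsto (fun n : ℕ => (r/8) * (1/((n:ℝ)+1))) atTop (𝓝 ((r/8) * 0)) :=
          tendsto_one_div_add_atTop_nhds_zero_nat.const_mul _
        have h2 : Tendsto (fun n : ℕ => (r/8 / ((n:ℝ)+1))) atTop (𝓝 0) := by
          simpa [div_eq_mul_inv] using h1
        have h3 := (Complex.continuous_ofReal.tendsto 0).comp h2
        rw [Complex.ofReal_zero] at h3
        exact h3.congr fun n => rfl
      · exact Filter.Eventually.of_forall (fun n => ha0 n)
    have hcont_gn : ∀ n : ℕ, Continuous (fun θ => slope (fun ζ => f (ζ, c θ)) 0 (a n)) := by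
      intro n
      have heq : (fun θ => slope (fun ζ => f (ζ, c θ)) 0 (a n))
          = fun θ => (a n - 0)⁻¹ • (f (a n, c θ) - f (0, c θ)) := by
        funext θ; rw [slope_def_module]
      rw [heq]
      exact (((hcontf (a n) (haabs n)).sub hdcont0).const_smul (a n - 0)⁻¹)
    refine aestronglyMeasurable_of_tendsto_ae atTop
      (fun n => (hcont_gn n).aestronglyMeasurable) (ae_of_all _ (fun θ => ?_))
    exact (hasDerivAt_iff_tendsto_slope.mp (hB1 θ)).comp hatend
  have hF'_meas : AEStronglyMeasurable F' (volume.restrict (Ι (0:ℝ) (2*π))) := by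
    apply AEStronglyMeasurable.smul hderivc.aestronglyMeasurable
    apply AEStronglyMeasurable.add
    · refine AEStronglyMeasurable.smul (?_ : AEStronglyMeasurable (fun θ => (c θ - (0:ℂ))⁻¹) _) (haestrong_d.smul_const fstL)
      refine Continuous.aestronglyMeasurable ?_
      refine Continuous.inv₀ ((continuous_circleMap 0 R).sub continuous_const) ?_
      intro θ
      rw [sub_zero]; exact hc0 θ
    · refine AEStronglyMeasurable.smul hdcont0.aestronglyMeasurable ?_
      refine AEStronglyMeasurable.smul_const (Continuous.aestronglyMeasurable ?_)
        _
      refine Continuous.div continuous_const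
        (((continuous_circleMap 0 R).sub continuous_const).pow 2) ?_
      intro θ
      exact pow_ne_zero _ (by rw [sub_zero]; exact hc0 θ)
  -- the Lipschitz bound
  set C₁ : ℝ := (2*M₁+1)/(r/4) with hC₁
  have hC₁0 : 0 ≤ C₁ := by
    rw [hC₁]
    apply div_nonneg (by linarith) (by linarith)
  set Cb : ℝ := R * ((5*r/8)⁻¹ * C₁ + ((5*r/8)⁻¹)^2 * M₁) with hCb
  have hCb0 : 0 ≤ Cb := by
    rw [hCb]
    apply mul_nonneg hRpos.le
    apply add_nonneg
    · apply mul_nonneg (by positivity) hC₁0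
    · apply mul_nonneg (by positivity) hM₁0
  have hinv1 : ∀ (θ : ℝ) (u : ℂ), ‖u‖ < r/8 → 5*r/8 ≤ ‖c θ - u‖ := by
    intro θ u hu
    have h1 : ‖c θ‖ - ‖u‖ ≤ ‖c θ - u‖ := norm_sub_norm_le _ _
    rw [hcnorm θ, hR] at h1
    linarith
  have h_lip : ∀ᵐ θ ∂volume, θ ∈ Ι (0:ℝ) (2*π) →
      LipschitzOnWith (Real.nnabs Cb) (fun z : ℂ × ℂ => K z θ) (ball (0:ℂ × ℂ) (r/8)) := by
    refine ae_of_all _ (fun θ _ => ?_)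
    rw [lipschitzOnWith_iff_dist_le_mul]
    intro z hz z' hz'
    rw [mem_ball_zero_iff, Prod.norm_def, max_lt_iff] at hz hz'
    rw [dist_eq_norm, dist_eq_norm, Real.coe_nnabs, _root_.abs_of_nonneg hCb0]
    have key : K z θ - K z' θ = deriv (circleMap 0 R) θ *
        ((c θ - z.2)⁻¹ * (f (z.1, c θ) - f (z'.1, c θ))
          + ((c θ - z.2)⁻¹ - (c θ - z'.2)⁻¹) * f (z'.1, c θ)) := by
      simp only [hK]; ring
    have hdabs : ‖deriv (circleMap 0 R) θ‖ = R := by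
      rw [deriv_circleMap, norm_mul, Complex.norm_I, mul_one]
      exact hcnorm θ
    have hne : ∀ u : ℂ, ‖u‖ < r/8 → c θ - u ≠ 0 := by
      intro u hu
      have := hinv1 θ u hu
      intro hq
      rw [hq, norm_zero] at this
      linarith
    have e1 : ∀ u : ℂ, ‖u‖ < r/8 → ‖(c θ - u)⁻¹‖ ≤ (5*r/8)⁻¹ := by
      intro u hu
      rw [norm_inv]
      exact inv_anti₀ (by positivity) (hinv1 θ u hu)
    have e2 : ‖f (z.1, c θ) - f (z'.1, c θ)‖ ≤ C₁ * ‖z.1 - z'.1‖ := by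
      have hw : ‖c θ‖ = 3*r/4 := by rw [hcabs θ, hR]
      have hMs : ∀ a w : ℂ, ‖a‖ ≤ r/2 → ‖w‖ = 3*r/4 → ‖f (a, w)‖ ≤ M₁ := by
        intro a w haw hww
        exact hM₁ a w haw (by rw [hww, hR])
      have h5 := sliceLip hr hf hM₁0 hMs hw hz.1 hz'.1
      rw [hC₁]
      exact h5
    have e3 : ‖(c θ - z.2)⁻¹ - (c θ - z'.2)⁻¹‖ ≤ (5*r/8)⁻¹^2 * ‖z.2 - z'.2‖ := by
      have ha2 := hne z.2 hz.2
      have hb2 := hne z'.2 hz'.2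
      have hid : (c θ - z.2)⁻¹ - (c θ - z'.2)⁻¹
          = (z.2 - z'.2) * ((c θ - z.2)⁻¹ * (c θ - z'.2)⁻¹) := by
        field_simp
        ring
      rw [hid, norm_mul, norm_mul]
      calc ‖z.2 - z'.2‖ * (‖(c θ - z.2)⁻¹‖ * ‖(c θ - z'.2)⁻¹‖)
          ≤ ‖z.2 - z'.2‖ * ((5*r/8)⁻¹ * (5*r/8)⁻¹) := by
            refine mul_le_mul_of_nonneg_left ?_ (norm_nonneg _)
            exact mul_le_mul (e1 _ hz.2) (e1 _ hz'.2) (norm_nonneg _) (by positivity)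
      _ = (5*r/8)⁻¹^2 * ‖z.2 - z'.2‖ := by ring
    have e4 : ‖f (z'.1, c θ)‖ ≤ M₁ := hM₁ _ _ (by linarith [hz'.1]) (hcabs θ)
    have hfst2 : ‖z.1 - z'.1‖ ≤ ‖z - z'‖ := norm_fst_le (z - z')
    have hsnd2 : ‖z.2 - z'.2‖ ≤ ‖z - z'‖ := norm_snd_le (z - z')
    have inner_le : ‖(c θ - z.2)⁻¹ * (f (z.1, c θ) - f (z'.1, c θ))
        + ((c θ - z.2)⁻¹ - (c θ - z'.2)⁻¹) * f (z'.1, c θ)‖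
        ≤ (5*r/8)⁻¹ * (C₁ * ‖z - z'‖) + ((5*r/8)⁻¹^2 * ‖z - z'‖) * M₁ := by
      refine le_trans (norm_add_le _ _) (add_le_add ?_ ?_)
      · rw [norm_mul]
        have h2 : ‖f (z.1, c θ) - f (z'.1, c θ)‖ ≤ C₁ * ‖z - z'‖ :=
          le_trans e2 (mul_le_mul_of_nonneg_left hfst2 hC₁0)
        exact mul_le_mul (e1 _ hz.2) h2 (norm_nonneg _) (by positivity)
      · rw [norm_mul]
        have h3 : ‖(c θ - z.2)⁻¹ - (c θ - z'.2)⁻¹‖ ≤ (5*r/8)⁻¹^2 * ‖z - z'‖ :=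
          le_trans e3 (mul_le_mul_of_nonneg_left hsnd2 (by positivity))
        exact mul_le_mul h3 e4 (norm_nonneg _) (by positivity)
    calc ‖K z θ - K z' θ‖
        = R * ‖(c θ - z.2)⁻¹ * (f (z.1, c θ) - f (z'.1, c θ))
          + ((c θ - z.2)⁻¹ - (c θ - z'.2)⁻¹) * f (z'.1, c θ)‖ := by
          rw [key, norm_mul, hdabs]
      _ ≤ R * ((5*r/8)⁻¹ * (C₁ * ‖z - z'‖) + ((5*r/8)⁻¹^2 * ‖z - z'‖) * M₁) :=
          mul_le_mul_of_nonneg_left inner_le hRpos.le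
      _ = Cb * ‖z - z'‖ := by rw [hCb]; ring
  -- apply the dominated differentiation theorem
  have key := intervalIntegral.hasFDerivAt_integral_of_dominated_loc_of_lip
    (𝕜 := ℂ) (μ := volume) (F := K) (F' := F') (x₀ := (0:ℂ × ℂ)) (a := 0) (b := 2*π)
    (bound := fun _ => Cb) (s := ball (0:ℂ × ℂ) (r/8)) (ball_mem_nhds _ (by positivity)) hF_meas hF_int hF'_meas h_lip
    intervalIntegrable_const (ae_of_all _ fun θ _ => h_diff θ)
  have hG : DifferentiableAt ℂ (fun z : ℂ × ℂ => ∫ θ in (0:ℝ)..(2*π), K z θ) 0 :=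
    key.2.differentiableAt
  have heq : (fun z : ℂ × ℂ => ∮ w in C(0, 3*r/4), (w - z.2)⁻¹ • f (z.1, w))
      = fun z : ℂ × ℂ => ∫ θ in (0:ℝ)..(2*π), K z θ := by
    funext z
    rw [← hR]
    simp only [circleIntegral, hK, smul_eq_mul, hc]
  rw [heq]
  exact hG



lemma sliceDiffAt₂ {r : ℝ} {f : ℂ × ℂ → ℂ} (hf : DifferentiableOn ℂ f (S r)) {a b : ℂ}
    (ha : ‖a‖ < r) (hb : ‖b‖ < r) (h : ¬(a = 0 ∧ b = 0)) :
    DifferentiableAt ℂ (fun w => f (a, w)) b :=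
  (diffAt hf ha hb h).comp b ((differentiableAt_const _).prodMk (differentiableAt_id))


/-- Cauchy formula on the punctured polydisc. -/
lemma cauchy_eq {r : ℝ} (hr : 0 < r) {f : ℂ × ℂ → ℂ} (hf : DifferentiableOn ℂ f (S r))
    {z : ℂ × ℂ} (h1 : ‖z.1‖ < r/8) (h2 : ‖z.2‖ < r/8) (hz : z ≠ (0,0)) :
    (∮ w in C(0, 3*r/4), (w - z.2)⁻¹ • f (z.1, w)) = (2 * π * I) • f z := by
  have hz2R : z.2 ∈ ball (0:ℂ) (3*r/4) := by
    rw [mem_ball_zero_iff]; linarith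
  by_cases hz1 : z.1 = 0
  · -- slice z.1 = 0 : removable singularity
    have hz2 : z.2 ≠ 0 := by
      intro h; exact hz (Prod.ext hz1 h)
    set φ : ℂ → ℂ := fun w => f (0, w) with hφ
    -- boundedness of φ near 0 via the maximum principle
    have hbdd : ∃ M, ∀ w : ℂ, w ≠ 0 → ‖w‖ < r/8 → ‖φ w‖ ≤ M := by
      have hsub : (sphere (0:ℂ) (r/2)) ×ˢ (closedBall (0:ℂ) (r/8)) ⊆ S r := by
        rintro ⟨a, b⟩ ⟨ha, hb⟩
        rw [mem_sphere_zero_iff_norm] at ha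
        rw [mem_closedBall_zero_iff] at hb
        refine mem_S (by linarith) (by linarith) ?_
        rintro ⟨h0, -⟩; rw [h0] at ha; simp at ha; linarith
      obtain ⟨M, hM⟩ := (((isCompact_sphere (0:ℂ) (r/2)).prod
        (isCompact_closedBall (0:ℂ) (r/8)))).exists_bound_of_continuousOn
        (hf.continuousOn.mono hsub)
      refine ⟨M, fun w hw0 hw => ?_⟩
      have hdc : DiffContOnCl ℂ (fun ζ => f (ζ, w)) (ball (0:ℂ) (r/2)) := by
        have hdiff : DifferentiableOn ℂ (fun ζ => f (ζ, w)) (ball (0:ℂ) (r*(3/4))) := by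
          intro ζ hζ
          rw [mem_ball_zero_iff] at hζ
          exact (sliceDiffAt₁ hf (by linarith) (by linarith)
            (fun hq => hw0 hq.2)).differentiableWithinAt
        refine DifferentiableOn.diffContOnCl (hdiff.mono ?_)
        intro ζ hζ
        rw [closure_ball (0:ℂ) (by positivity : (0:ℝ) < r/2).ne', mem_closedBall_zero_iff] at hζ
        rw [mem_ball_zero_iff]
        calc ‖ζ‖ ≤ r/2 := hζ
        _ < r*(3/4) := by linarith
      refine Complex.norm_le_of_forall_mem_frontier_norm_le isBounded_ball hdc ?_
        (subset_closure (mem_ball_self (by positivity)))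
      intro ζ hζ
      rw [frontier_ball (0:ℂ) (by positivity : (0:ℝ) < r/2).ne'] at hζ
      exact hM (ζ, w) ⟨hζ, by rw [mem_closedBall_zero_iff]; linarith⟩
    obtain ⟨M, hM⟩ := hbdd
    -- removable singularity: update φ at 0
    set h : ℂ → ℂ := Function.update φ 0 (limUnder (𝓝[≠] 0) φ) with hh
    have hφAt : ∀ x : ℂ, x ≠ 0 → ‖x‖ < r → DifferentiableAt ℂ φ x := by
      intro x hx0 hx
      exact sliceDiffAt₂ hf (by simpa using hr) hx (fun hq => hx0 hq.2)
    have hφd : DifferentiableOn ℂ φ (ball (0:ℂ) (r/8) \ {0}) := by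
      intro w hw
      rw [mem_diff, mem_ball_zero_iff, mem_singleton_iff] at hw
      exact (hφAt w hw.2 (by linarith [hw.1])).differentiableWithinAt
    have hupd : DifferentiableOn ℂ h (ball (0:ℂ) (r/8)) := by
      apply Complex.differentiableOn_update_limUnder_of_bddAbove
        (ball_mem_nhds _ (by positivity)) hφd
      refine ⟨M, ?_⟩
      rintro x ⟨w, hw, rfl⟩
      rw [mem_diff, mem_ball_zero_iff, mem_singleton_iff] at hw
      exact hM w hw.2 hw.1
    have hdAt : ∀ x ∈ ball (0:ℂ) (r*(7/8)), DifferentiableAt ℂ h x := by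
      intro x hx
      rw [mem_ball_zero_iff] at hx
      by_cases hx0 : x = 0
      · subst hx0
        exact hupd.differentiableAt (isOpen_ball.mem_nhds (mem_ball_self (by positivity)))
      · have heq : h =ᶠ[𝓝 x] φ :=
          Filter.eventuallyEq_of_mem (compl_singleton_mem_nhds hx0)
            (fun y hy => Function.update_of_ne hy _ _)
        exact (hφAt x hx0 (by linarith)).congr_of_eventuallyEq heq
    have hint := Complex.circleIntegral_sub_inv_smul_of_differentiable_on_off_countable
      (s := ∅) countable_empty hz2R
      (fun x hx => (hdAt x (by
        rw [mem_closedBall_zero_iff] at hx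
        rw [mem_ball_zero_iff]
        calc ‖x‖ ≤ 3*r/4 := hx
        _ < r*(7/8) := by linarith)).continuousAt.continuousWithinAt)
      (fun x hx => hdAt x (by
        have hx1 := hx.1
        rw [mem_ball_zero_iff] at hx1 ⊢
        calc ‖x‖ < 3*r/4 := hx1
        _ < r*(7/8) := by linarith))
    have hcong : (∮ w in C(0, 3*r/4), (w - z.2)⁻¹ • f (z.1, w))
        = ∮ w in C(0, 3*r/4), (w - z.2)⁻¹ • h w := by
      refine circleIntegral.integral_congr (by positivity) ?_
      intro w hw
      rw [mem_sphere_zero_iff_norm] at hw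
      have hw0 : w ≠ 0 := by
        intro hq; rw [hq] at hw; simp at hw; linarith
      simp only [hh]
      rw [Function.update_of_ne hw0, hφ, hz1]
    rw [hcong, hint, hh, Function.update_of_ne hz2, hφ]
    congr 1
    rw [← hz1]
  · -- slice z.1 ≠ 0 : direct Cauchy formula
    have hdc : DiffContOnCl ℂ (fun w => f (z.1, w)) (ball (0:ℂ) (3*r/4)) := by
      have hdiff : DifferentiableOn ℂ (fun w => f (z.1, w)) (ball (0:ℂ) (r*(7/8))) := by
        intro w hw
        rw [mem_ball_zero_iff] at hw
        exact (sliceDiffAt₂ hf (by linarith) (by linarith)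
          (fun hq => hz1 hq.1)).differentiableWithinAt
      refine DifferentiableOn.diffContOnCl (hdiff.mono ?_)
      intro w hw
      rw [closure_ball (0:ℂ) (by positivity : (0:ℝ) < 3*r/4).ne', mem_closedBall_zero_iff] at hw
      rw [mem_ball_zero_iff]
      calc ‖w‖ ≤ 3*r/4 := hw
      _ < r*(7/8) := by linarith
    have := hdc.circleIntegral_sub_inv_smul hz2R
    simpa using this


end H18


/-- Hartogs' extension for an isolated point in two variables: a function holomorphic on a
punctured polydisc `Δ(0,r) \ {(0,0)} ⊆ ℂ²` extends holomorphically to the whole polydisc. -/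
theorem stmt_18 (r : ℝ) (hr : 0 < r) (f : ℂ × ℂ → ℂ)
    (hf : DifferentiableOn ℂ f
      ({p : ℂ × ℂ | ‖p.1‖ < r ∧ ‖p.2‖ < r} \ {(0, 0)})) :
    ∃ g : ℂ × ℂ → ℂ,
      DifferentiableOn ℂ g {p : ℂ × ℂ | ‖p.1‖ < r ∧ ‖p.2‖ < r} ∧
      ∀ p ∈ ({p : ℂ × ℂ | ‖p.1‖ < r ∧ ‖p.2‖ < r} \ {(0, 0)} :
          Set (ℂ × ℂ)),
        g p = f p := by
  have hfS : DifferentiableOn ℂ f (H18.S r) := hf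
  set G : ℂ × ℂ → ℂ :=
    fun z => (2*π*I : ℂ)⁻¹ • ∮ w in C(0, 3*r/4), (w - z.2)⁻¹ • f (z.1, w) with hG
  refine ⟨fun p => if p = (0,0) then G (0,0) else f p, ?_, ?_⟩
  · intro p hp
    by_cases hp0 : p = (0,0)
    · subst hp0
      have hGd : DifferentiableAt ℂ G ((0:ℂ), (0:ℂ)) := by
        rw [hG]
        exact (H18.diffAt_G hr hfS).const_smul (2*π*I : ℂ)⁻¹
      have hDopen : IsOpen {q : ℂ × ℂ | ‖q.1‖ < r/8 ∧ ‖q.2‖ < r/8} :=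
        (isOpen_lt (continuous_norm.comp continuous_fst) continuous_const).inter
          (isOpen_lt (continuous_norm.comp continuous_snd) continuous_const)
      have h0mem : ((0:ℂ), (0:ℂ)) ∈ {q : ℂ × ℂ | ‖q.1‖ < r/8 ∧ ‖q.2‖ < r/8} := by
        constructor <;> · simp; positivity
      have heq : ∀ z ∈ {q : ℂ × ℂ | ‖q.1‖ < r/8 ∧ ‖q.2‖ < r/8},
          (if z = ((0:ℂ), (0:ℂ)) then G (0,0) else f z) = G z := by
        intro z hz
        by_cases hz0 : z = ((0:ℂ), (0:ℂ))
        · rw [if_pos hz0, hz0]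
        · rw [if_neg hz0, hG]
          simp only
          rw [H18.cauchy_eq hr hfS hz.1 hz.2 hz0, smul_smul,
            inv_mul_cancel₀ Complex.two_pi_I_ne_zero, one_smul]
      have hev : (fun p => if p = ((0:ℂ), (0:ℂ)) then G (0,0) else f p)
          =ᶠ[𝓝 (((0:ℂ), (0:ℂ)) : ℂ × ℂ)] G :=
        eventually_of_mem (hDopen.mem_nhds h0mem) heq
      exact (hev.differentiableAt_iff.mpr hGd).differentiableWithinAt
    · have hpS : p ∈ H18.S r := ⟨hp, by simpa using hp0⟩
      have hfd : DifferentiableAt ℂ f p := hfS.differentiableAt (H18.isOpen_S.mem_nhds hpS)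
      have hev : (fun q => if q = ((0:ℂ), (0:ℂ)) then G (0,0) else f q) =ᶠ[𝓝 p] f := by
        filter_upwards [compl_singleton_mem_nhds hp0] with q hq
        rw [if_neg (by simpa using hq)]
      exact (hev.differentiableAt_iff.mpr hfd).differentiableWithinAt
  · intro p hp
    have hp0 : p ≠ (0,0) := by simpa using hp.2
    simp only [if_neg hp0]
end
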